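/- arXiv:2603.22835 — 2 statements merged into one kernel-verified Lean document; each statement's English description precedes it below -/
import Mathlib

section
/- (Gaussian tail control at level a via the Lambert critical value.) Let a ∈ (0,1), C > 0, and let Z be a centered Gaussian random variable with variance v satisfying 0 < v ≤ C. Let x > 0 be the unique positive solution of x·exp(x) = 2/(π·a²) and set κ_a = √(C·x). Then P(|Z| > κ_a) ≤ a. -/
/-!
Dominating `e^{-y²/2v}` by `(y/κ) e^{-y²/2v}` on `(κ, ∞)` (Mills' inequality) and using the
symmetry of the centered Gaussian gives `P(|Z| > κ) ≤ √(2v/π) κ⁻¹ e^{-κ²/2v}`. This bound increases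
with the variance, so it may be evaluated at `v = C`; for `κ = √(C x)` it becomes
`√(2/(π x)) e^{-x/2}`, which is `a` precisely because `x eˣ = 2/(π a²)`.
-/
open MeasureTheory ProbabilityTheory Real Set Filter Topology NNReal

lemma integral_Ioi_mul_exp_neg_mul_sq {b : ℝ} (hb : 0 < b) (κ : ℝ) :
    ∫ y in Ioi κ, y * exp (-b * y ^ 2) = exp (-b * κ ^ 2) / (2 * b) := by
  have hderiv (y : ℝ) (_ : y ∈ Ici κ) :
      HasDerivAt (fun u ↦ -(2 * b)⁻¹ * exp (-b * u ^ 2)) (y * exp (-b * y ^ 2)) y :=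
    (((hasDerivAt_pow 2 y).const_mul (-b)).exp.const_mul _).congr_deriv (by norm_num; field_simp)
  have hlim : Tendsto (fun u ↦ -(2 * b)⁻¹ * exp (-b * u ^ 2)) atTop (𝓝 0) := by
    have : Tendsto (fun u : ℝ ↦ -b * u ^ 2) atTop atBot :=
      (tendsto_pow_atTop two_ne_zero).const_mul_atTop_of_neg (neg_neg_of_pos hb)
    simpa using (tendsto_exp_atBot.comp this).const_mul (-(2 * b)⁻¹)
  rw [integral_Ioi_of_hasDerivAt_of_tendsto' hderiv
    (integrable_mul_exp_neg_mul_sq hb).integrableOn hlim]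
  ring

lemma integral_Ioi_exp_neg_mul_sq_le {b κ : ℝ} (hb : 0 < b) (hκ : 0 < κ) :
    ∫ y in Ioi κ, exp (-b * y ^ 2) ≤ exp (-b * κ ^ 2) / (2 * b * κ) :=
  calc ∫ y in Ioi κ, exp (-b * y ^ 2)
      ≤ ∫ y in Ioi κ, κ⁻¹ * (y * exp (-b * y ^ 2)) := by
        refine setIntegral_mono_on (integrable_exp_neg_mul_sq hb).integrableOn
          ((integrable_mul_exp_neg_mul_sq hb).const_mul _).integrableOn measurableSet_Ioi
          fun y hy ↦ ?_
        rw [← mul_assoc]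
        exact le_mul_of_one_le_left (exp_pos _).le ((one_le_inv_mul₀ hκ).2 (le_of_lt hy))
    _ = exp (-b * κ ^ 2) / (2 * b * κ) := by
        rw [integral_const_mul, integral_Ioi_mul_exp_neg_mul_sq hb]
        field_simp

noncomputable def millsBound (v κ : ℝ) : ℝ := √(2 * v / π) / κ * exp (-κ ^ 2 / (2 * v))

lemma gaussianReal_Ioi_le_half_millsBound {v : ℝ≥0} (hv : v ≠ 0) {κ : ℝ} (hκ : 0 < κ) :
    gaussianReal 0 v (Ioi κ) ≤ ENNReal.ofReal (millsBound v κ / 2) := by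
  have hv' : (0 : ℝ) < v := by positivity
  have hpdf (y : ℝ) :
      gaussianPDFReal 0 v y = (√(2 * π * v))⁻¹ * exp (-(2 * (v : ℝ))⁻¹ * y ^ 2) := by
    rw [gaussianPDFReal, sub_zero, neg_div, neg_mul, div_eq_inv_mul]
  rw [gaussianReal_apply_eq_integral 0 hv]
  refine ENNReal.ofReal_le_ofReal ?_
  simp_rw [hpdf]
  rw [integral_const_mul]
  calc (√(2 * π * v))⁻¹ * ∫ y in Ioi κ, exp (-(2 * (v : ℝ))⁻¹ * y ^ 2)
      ≤ (√(2 * π * v))⁻¹ * (exp (-(2 * (v : ℝ))⁻¹ * κ ^ 2) / (2 * (2 * (v : ℝ))⁻¹ * κ)) := by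
        gcongr
        exact integral_Ioi_exp_neg_mul_sq_le (by positivity) hκ
    _ = millsBound v κ / 2 := by
        have hsqrt : √(2 * v / π) = 2 * v / √(2 * π * v) := by
          refine eq_div_of_mul_eq (by positivity) ?_
          rw [← sqrt_mul (by positivity), show 2 * v / π * (2 * π * v) = (2 * v : ℝ) ^ 2 by
            field_simp, sqrt_sq (by positivity)]
        have hexp : -(2 * (v : ℝ))⁻¹ * κ ^ 2 = -κ ^ 2 / (2 * v) := by ring
        rw [millsBound, hexp, hsqrt]
        field_simp

lemma gaussianReal_lt_abs_eq_two_mul_Ioi {v : ℝ≥0} {κ : ℝ} (hκ : 0 ≤ κ) :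
    gaussianReal 0 v {z | κ < |z|} = 2 * gaussianReal 0 v (Ioi κ) := by
  have hsplit : {z : ℝ | κ < |z|} = Iio (-κ) ∪ Ioi κ := by
    ext z
    simp only [mem_ofPred_eq, mem_union, mem_Iio, mem_Ioi, lt_abs, lt_neg]
    tauto
  have hneg : gaussianReal 0 v (Iio (-κ)) = gaussianReal 0 v (Ioi κ) := by
    conv_lhs => rw [← neg_zero, ← gaussianReal_map_neg]
    rw [Measure.map_apply measurable_neg measurableSet_Iio]
    congr 1
    ext z
    simp
  have hdisj : Disjoint (Iio (-κ)) (Ioi κ) :=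
    (Iic_disjoint_Ioi (neg_le_self hκ)).mono_left Iio_subset_Iic_self
  rw [hsplit, measure_union hdisj measurableSet_Ioi, hneg, two_mul]

lemma gaussianReal_lt_abs_le_millsBound {v : ℝ≥0} (hv : v ≠ 0) {κ : ℝ} (hκ : 0 < κ) :
    gaussianReal 0 v {z | κ < |z|} ≤ ENNReal.ofReal (millsBound v κ) := by
  rw [gaussianReal_lt_abs_eq_two_mul_Ioi hκ.le]
  calc 2 * gaussianReal 0 v (Ioi κ) ≤ 2 * ENNReal.ofReal (millsBound v κ / 2) := by
        gcongr
        exact gaussianReal_Ioi_le_half_millsBound hv hκ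
    _ = ENNReal.ofReal (millsBound v κ) := by
        rw [← ENNReal.ofReal_ofNat 2, ← ENNReal.ofReal_mul zero_le_two,
          mul_div_cancel₀ _ two_ne_zero]

lemma millsBound_mono_left {v C κ : ℝ} (hv : 0 < v) (hvC : v ≤ C) (hκ : 0 ≤ κ) :
    millsBound v κ ≤ millsBound C κ := by
  have hC : 0 < C := hv.trans_le hvC
  simp only [millsBound, neg_div]
  gcongr

lemma millsBound_sqrt_mul {C x : ℝ} (hC : 0 < C) (hx : 0 < x) :
    millsBound C √(C * x) = √(2 / (π * x)) * exp (-x / 2) := by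
  rw [millsBound, sq_sqrt (by positivity), ← sqrt_div' _ (by positivity)]
  congr 2 <;> field_simp

lemma eq_sqrt_mul_exp_of_mul_exp_eq {a x : ℝ} (ha : 0 < a) (hx : 0 < x)
    (hxa : x * exp x = 2 / (π * a ^ 2)) : a = √(2 / (π * x)) * exp (-x / 2) := by
  have ha2 : a ^ 2 = 2 / (π * x) * exp (-x) := by
    rw [exp_neg]
    field_simp at hxa ⊢
    linarith
  rw [← sqrt_sq ha.le, ha2, sqrt_mul (by positivity), exp_half]

theorem gaussian_tail_le_level_of_lambert_general
    {Ω : Type*} [MeasurableSpace Ω] (P : Measure Ω) [IsProbabilityMeasure P]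
    (Z : Ω → ℝ) (v C a x : ℝ) (hv : 0 < v) (hC : 0 < C) (hvC : v ≤ C)
    (hZ : P.map Z = gaussianReal 0 ⟨v, hv.le⟩)
    (ha : 0 < a) (hx : 0 < x)
    (hxa : x * Real.exp x = 2 / (π * a ^ 2))
    (κ : ℝ) (hκ : κ = Real.sqrt (C * x)) :
    P {ω | κ < |Z ω|} ≤ ENNReal.ofReal a := by
  have hκ_pos : 0 < κ := hκ ▸ sqrt_pos.2 (mul_pos hC hx)
  have hv_ne : (⟨v, hv.le⟩ : ℝ≥0) ≠ 0 := ne_of_gt hv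
  -- explicit instance: `⟨v, _⟩` is not syntactically of type `ℝ≥0`, so instance search misses it
  have hZ_meas : AEMeasurable Z P :=
    AEMeasurable.of_map_ne_zero
      (hZ ▸ (instIsProbabilityMeasureGaussianReal 0 _).ne_zero)
  calc P {ω | κ < |Z ω|} = gaussianReal 0 ⟨v, hv.le⟩ {z | κ < |z|} := by
        rw [← hZ, Measure.map_apply_of_aemeasurable hZ_meas
          (measurableSet_lt measurable_const measurable_abs)]
        rfl
    _ ≤ ENNReal.ofReal (millsBound v κ) := gaussianReal_lt_abs_le_millsBound hv_ne hκ_pos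
    _ ≤ ENNReal.ofReal (millsBound C κ) :=
        ENNReal.ofReal_le_ofReal (millsBound_mono_left hv hvC hκ_pos.le)
    _ = ENNReal.ofReal a := by
        rw [hκ, millsBound_sqrt_mul hC hx, ← eq_sqrt_mul_exp_of_mul_exp_eq ha hx hxa]

/-- Gaussian tail control at level `a` via the Lambert critical value: if `Z` is a centered
Gaussian random variable with variance `v`, `0 < v ≤ C`, `a ∈ (0,1)`, `x > 0` solves
`x · exp x = 2/(π a²)` and `κₐ = √(C·x)`, then `P(|Z| > κₐ) ≤ a`. -/
theorem gaussian_tail_le_level_of_lambert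
    {Ω : Type*} [MeasurableSpace Ω] (P : Measure Ω) [IsProbabilityMeasure P]
    (Z : Ω → ℝ) (v C a x : ℝ) (hv : 0 < v) (hC : 0 < C) (hvC : v ≤ C)
    (hZ : P.map Z = gaussianReal 0 ⟨v, hv.le⟩)
    (ha : 0 < a) (ha1 : a < 1) (hx : 0 < x)
    (hxa : x * Real.exp x = 2 / (π * a ^ 2))
    (κ : ℝ) (hκ : κ = Real.sqrt (C * x)) :
    P {ω | κ < |Z ω|} ≤ ENNReal.ofReal a :=
  gaussian_tail_le_level_of_lambert_general P Z v C a x hv hC hvC hZ ha hx hxa κ hκ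
end

section
/- (Component-wise tail bound for the least-squares error.) Let N, K be positive natural numbers, let F be a real N × K matrix with FᵀF invertible, and let e_1, …, e_N be independent real random variables with E[e_j] = 0 and |e_j| ≤ c almost surely, where c > 0. Fix k ∈ {1, …, K} and suppose ((FᵀF)⁻¹)_{kk} > 0. Then for every t > 0, P(|((FᵀF)⁻¹Fᵀe)_k| ≥ t) ≤ 2·exp(−t² / (2 c² ((FᵀF)⁻¹)_{kk})). -/
/-!
The `k`-th least-squares coordinate is the weighted sum `∑ j, a j * e j` with `a` the `k`-th row
of `(FᵀF)⁻¹Fᵀ`. By Hoeffding's lemma each `e j` is sub-Gaussian with parameter `c²`, so by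
independence the weighted sum is sub-Gaussian with parameter `c² ∑ j, a j ²`, and the Chernoff
bound applied to the sum and to its negative gives the two-sided tail. Finally
`∑ j, a j ² = ((FᵀF)⁻¹Fᵀ F(FᵀF)⁻¹)ₖₖ = ((FᵀF)⁻¹)ₖₖ`.
-/

open Matrix MeasureTheory ProbabilityTheory Real NNReal

namespace Matrix

lemma sum_sq_apply_eq_mul_transpose_apply_self {m n R : Type*} [Fintype n] [CommSemiring R]
    (M : Matrix m n R) (k : m) :
    ∑ j, M k j ^ 2 = (M * Mᵀ) k k := by
  simp only [mul_apply, transpose_apply, sq]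

lemma inv_gram_mul_transpose_mul_transpose {m n R : Type*} [Fintype m] [Fintype n]
    [DecidableEq n] [CommRing R] (F : Matrix m n R) (hF : IsUnit (Fᵀ * F)) :
    (Fᵀ * F)⁻¹ * Fᵀ * ((Fᵀ * F)⁻¹ * Fᵀ)ᵀ = (Fᵀ * F)⁻¹ := by
  have hdet : IsUnit (Fᵀ * F).det := (isUnit_iff_isUnit_det _).mp hF
  rw [transpose_mul, transpose_nonsing_inv, transpose_mul, transpose_transpose, Matrix.mul_assoc,
    ← Matrix.mul_assoc Fᵀ, mul_nonsing_inv _ hdet, Matrix.mul_one]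

end Matrix

namespace ProbabilityTheory

variable {Ω ι : Type*} {mΩ : MeasurableSpace Ω} {μ : Measure Ω} {X : Ω → ℝ}

lemma hasSubgaussianMGF_of_abs_le_of_integral_eq_zero [IsProbabilityMeasure μ] {c : ℝ}
    (hm : AEMeasurable X μ) (hb : ∀ᵐ ω ∂μ, |X ω| ≤ c) (h0 : μ[X] = 0) :
    HasSubgaussianMGF X (‖c‖₊ ^ 2) μ := by
  have hparam : (‖c - -c‖₊ / 2) ^ 2 = ‖c‖₊ ^ 2 := by
    ext
    simp [← two_mul]
  rw [← hparam]
  exact hasSubgaussianMGF_of_mem_Icc_of_integral_eq_zero hm (hb.mono fun _ hω ↦ abs_le.mp hω) h0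

namespace HasSubgaussianMGF

lemma measure_abs_ge_le [IsFiniteMeasure μ] {c : ℝ≥0} (h : HasSubgaussianMGF X c μ) {ε : ℝ}
    (hε : 0 ≤ ε) :
    μ {ω | ε ≤ |X ω|} ≤ ENNReal.ofReal (2 * exp (-ε ^ 2 / (2 * c))) := by
  have tail : ∀ {Y : Ω → ℝ}, HasSubgaussianMGF Y c μ →
      μ {ω | ε ≤ Y ω} ≤ ENNReal.ofReal (exp (-ε ^ 2 / (2 * c))) := fun hY ↦
    (ofReal_measureReal).symm.trans_le (ENNReal.ofReal_le_ofReal (hY.measure_ge_le hε))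
  calc μ {ω | ε ≤ |X ω|} = μ ({ω | ε ≤ X ω} ∪ {ω | ε ≤ (-X) ω}) := by
        congr 1
        ext ω
        simp [le_abs]
    _ ≤ μ {ω | ε ≤ X ω} + μ {ω | ε ≤ (-X) ω} := measure_union_le _ _
    _ ≤ ENNReal.ofReal (exp (-ε ^ 2 / (2 * c))) + ENNReal.ofReal (exp (-ε ^ 2 / (2 * c))) :=
        add_le_add (tail h) (tail h.neg)
    _ = ENNReal.ofReal (2 * exp (-ε ^ 2 / (2 * c))) := by
        rw [← ENNReal.ofReal_add (by positivity) (by positivity), ← two_mul]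

lemma sum_mul_of_iIndepFun [Fintype ι] {X : ι → Ω → ℝ} (h_indep : iIndepFun X μ) {c : ℝ≥0}
    (h : ∀ i, HasSubgaussianMGF (X i) c μ) (a : ι → ℝ) :
    HasSubgaussianMGF (fun ω ↦ ∑ i, a i * X i ω) ((∑ i, ‖a i‖₊ ^ 2) * c) μ := by
  -- `HasSubgaussianMGF.const_mul` states its factor as the subtype element `⟨r ^ 2, _⟩`.
  have hparam (r : ℝ) : (⟨r ^ 2, sq_nonneg r⟩ : ℝ≥0) = ‖r‖₊ ^ 2 := by
    ext
    change r ^ 2 = ((‖r‖₊ ^ 2 : ℝ≥0) : ℝ)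
    simp
  rw [Finset.sum_mul]
  exact sum_of_iIndepFun (h_indep.comp (fun i x ↦ a i * x) fun i ↦ measurable_const_mul (a i))
    fun i _ ↦ hparam (a i) ▸ (h i).const_mul (a i)

end HasSubgaussianMGF

end ProbabilityTheory

theorem least_squares_component_tail_bound_general
    {Ω : Type*} [MeasurableSpace Ω] (P : Measure Ω) [IsProbabilityMeasure P]
    (N K : ℕ)
    (F : Matrix (Fin N) (Fin K) ℝ) (hF : IsUnit (Fᵀ * F))
    (e : Fin N → Ω → ℝ) (c : ℝ)
    (hmeas : ∀ j, Measurable (e j))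
    (hindep : iIndepFun e P)
    (hmean : ∀ j, ∫ ω, e j ω ∂P = 0)
    (hbdd : ∀ j, ∀ᵐ ω ∂P, |e j ω| ≤ c)
    (k : Fin K) (t : ℝ) (ht : 0 < t) :
    P {ω | t ≤ |((Fᵀ * F)⁻¹ * Fᵀ).mulVec (fun j => e j ω) k|} ≤
      ENNReal.ofReal (2 * Real.exp (-t ^ 2 / (2 * c ^ 2 * (Fᵀ * F)⁻¹ k k))) := by
  set M := (Fᵀ * F)⁻¹ * Fᵀ
  have hsum := HasSubgaussianMGF.sum_mul_of_iIndepFun hindep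
    (fun j ↦ hasSubgaussianMGF_of_abs_le_of_integral_eq_zero (hmeas j).aemeasurable (hbdd j)
      (hmean j)) (M k)
  have hparam : ((∑ j, ‖M k j‖₊ ^ 2) * ‖c‖₊ ^ 2 : ℝ≥0) =
      c ^ 2 * (Fᵀ * F)⁻¹ k k := by
    push_cast
    simp only [Real.norm_eq_abs, sq_abs]
    rw [Matrix.sum_sq_apply_eq_mul_transpose_apply_self,
      Matrix.inv_gram_mul_transpose_mul_transpose F hF, mul_comm]
  simpa only [Matrix.mulVec, dotProduct, hparam, mul_assoc] using hsum.measure_abs_ge_le ht.le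

/-- Component-wise tail bound for the least-squares error: if the regression errors
`e 1, …, e N` are independent, centered and bounded by `c > 0` almost surely, then for each `k`
with `((FᵀF)⁻¹)ₖₖ > 0` and every `t > 0`,
`P(|((FᵀF)⁻¹Fᵀe)ₖ| ≥ t) ≤ 2 exp(−t² / (2 c² ((FᵀF)⁻¹)ₖₖ))`. -/
theorem least_squares_component_tail_bound
    {Ω : Type*} [MeasurableSpace Ω] (P : Measure Ω) [IsProbabilityMeasure P]
    (N K : ℕ) (hN : 0 < N) (hK : 0 < K)
    (F : Matrix (Fin N) (Fin K) ℝ) (hF : IsUnit (Fᵀ * F))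
    (e : Fin N → Ω → ℝ) (c : ℝ) (hc : 0 < c)
    (hmeas : ∀ j, Measurable (e j))
    (hindep : iIndepFun e P)
    (hint : ∀ j, Integrable (e j) P)
    (hmean : ∀ j, ∫ ω, e j ω ∂P = 0)
    (hbdd : ∀ j, ∀ᵐ ω ∂P, |e j ω| ≤ c)
    (k : Fin K) (hkk : 0 < (Fᵀ * F)⁻¹ k k) (t : ℝ) (ht : 0 < t) :
    P {ω | t ≤ |((Fᵀ * F)⁻¹ * Fᵀ).mulVec (fun j => e j ω) k|} ≤
      ENNReal.ofReal (2 * Real.exp (-t ^ 2 / (2 * c ^ 2 * (Fᵀ * F)⁻¹ k k))) :=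
  least_squares_component_tail_bound_general P N K F hF e c hmeas hindep hmean hbdd k t ht
end
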